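/- arXiv:2010.03219 — 7 statements merged into one kernel-verified Lean document; each statement's English description precedes it below -/
import Mathlib

section
/- There is no graph G with domination number 3 that is P3-γ-excellent; i.e., there is no graph G with γ(G)=3 such that every induced path on 3 vertices of G has its vertex set contained in some minimum dominating set of G, and every vertex of G lies in an induced P3 whose vertex set is contained in some minimum dominating set. -/
/-- The domination number of a finite simple graph. -/
noncomputable def gamma {V : Type*} [Fintype V] (G : SimpleGraph V) : ℕ :=
  sInf {k | ∃ D : Finset V, D.card = k ∧ ∀ v : V, v ∉ D → ∃ u ∈ D, G.Adj u v}

/-- `D` is a minimum dominating set (γ-set) of `G`. -/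
def IsGammaSet {V : Type*} [Fintype V] (G : SimpleGraph V) (D : Finset V) : Prop :=
  (∀ v : V, v ∉ D → ∃ u ∈ D, G.Adj u v) ∧ D.card = gamma G

/-- `G` is `H`-γ-excellent. -/
def HGammaExcellent {V W : Type*} [Fintype V] (G : SimpleGraph V) (H : SimpleGraph W) : Prop :=
  (∀ x : V, ∃ S : Set V, x ∈ S ∧ Nonempty (H ≃g G.induce S) ∧
      ∃ D : Finset V, IsGammaSet G D ∧ S ⊆ ↑D) ∧
  ∀ S : Set V, Nonempty (H ≃g G.induce S) → ∃ D : Finset V, IsGammaSet G D ∧ S ⊆ ↑D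

/-- An induced path on three vertices gives an isomorphic copy of `P₃`. -/
lemma p3_iso {V : Type*} (G : SimpleGraph V) {x y z : V} (hxy : G.Adj x y) (hyz : G.Adj y z)
    (hxz : ¬ G.Adj x z) (hne : x ≠ z) :
    Nonempty (SimpleGraph.pathGraph 3 ≃g G.induce ({x, y, z} : Set V)) := by
  have hxy' : x ≠ y := hxy.ne
  have hyz' : y ≠ z := hyz.ne
  have hx : x ∈ ({x, y, z} : Set V) := by simp
  have hy : y ∈ ({x, y, z} : Set V) := by simp
  have hz : z ∈ ({x, y, z} : Set V) := by simp
  let f : Fin 3 → ({x, y, z} : Set V) := ![⟨x, hx⟩, ⟨y, hy⟩, ⟨z, hz⟩]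
  have hbij : Function.Bijective f := by
    constructor
    · intro i j hij
      fin_cases i <;> fin_cases j <;> simp_all [f, Subtype.ext_iff]
    · rintro ⟨t, ht⟩
      simp only [Set.mem_insert_iff, Set.mem_singleton_iff] at ht
      rcases ht with h | h | h
      · exact ⟨0, by simp [f, h]⟩
      · exact ⟨1, by simp [f, h]⟩
      · exact ⟨2, by simp [f, h]⟩
  have hzx : ¬ G.Adj z x := fun h => hxz h.symm
  refine ⟨⟨Equiv.ofBijective f hbij, ?_⟩⟩
  intro i j
  show (G.induce _).Adj (f i) (f j) ↔ _
  fin_cases i <;> fin_cases j <;>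
    simp [f, SimpleGraph.pathGraph_adj, SimpleGraph.comap_adj, hxy, hyz, hxz,
      hxy.symm, hyz.symm, G.irrefl, hzx]

/-- Since `γ(G) = 3`, no pair of vertices dominates `G`. -/
lemma exists_undominated {V : Type*} [Fintype V] (G : SimpleGraph V) (hγ : gamma G = 3)
    (b c : V) : ∃ t : V, t ≠ b ∧ t ≠ c ∧ ¬ G.Adj b t ∧ ¬ G.Adj c t := by
  classical
  by_contra hcon
  push_neg at hcon
  have hmem : ({b, c} : Finset V).card ∈
      {k | ∃ D : Finset V, D.card = k ∧ ∀ v : V, v ∉ D → ∃ u ∈ D, G.Adj u v} := by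
    refine ⟨{b, c}, rfl, fun v hv => ?_⟩
    simp only [Finset.mem_insert, Finset.mem_singleton, not_or] at hv
    have := hcon v hv.1 hv.2
    by_cases hb : G.Adj b v
    · exact ⟨b, by simp, hb⟩
    · exact ⟨c, by simp, this hb⟩
  have hle : gamma G ≤ ({b, c} : Finset V).card := Nat.sInf_le hmem
  have : ({b, c} : Finset V).card ≤ 2 := by
    apply le_trans (Finset.card_insert_le _ _); simp
  omega

/-- In a `P₃`-γ-excellent graph with `γ = 3`, every induced path on three
vertices is a dominating set. -/
lemma path_dominates {V : Type*} [Fintype V] (G : SimpleGraph V) (hγ : gamma G = 3)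
    (hex : ∀ S : Set V, Nonempty (SimpleGraph.pathGraph 3 ≃g G.induce S) →
      ∃ D : Finset V, IsGammaSet G D ∧ S ⊆ ↑D)
    {x y z : V} (hxy : G.Adj x y) (hyz : G.Adj y z) (hxz : ¬ G.Adj x z) (hne : x ≠ z) :
    ∀ t : V, t ≠ x → t ≠ y → t ≠ z → G.Adj x t ∨ G.Adj y t ∨ G.Adj z t := by
  classical
  obtain ⟨D, ⟨hDdom, hDcard⟩, hSD⟩ := hex {x, y, z} (p3_iso G hxy hyz hxz hne)
  have hsub : ({x, y, z} : Finset V) ⊆ D := by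
    intro t ht
    simp only [Finset.mem_insert, Finset.mem_singleton] at ht
    rcases ht with h | h | h <;> subst h
    · exact hSD (by simp)
    · exact hSD (by simp)
    · exact hSD (by simp)
  have hcard3 : ({x, y, z} : Finset V).card = 3 := by
    rw [Finset.card_insert_of_notMem (by simp [hxy.ne, hne]),
      Finset.card_insert_of_notMem (by simp [hyz.ne]), Finset.card_singleton]
  have hDeq : D = ({x, y, z} : Finset V) :=
    (Finset.eq_of_subset_of_card_le hsub (by omega)).symm
  intro t htx hty htz
  have htD : t ∉ D := by
    rw [hDeq]; simp [htx, hty, htz]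
  obtain ⟨u, huD, hu⟩ := hDdom t htD
  rw [hDeq] at huD
  simp only [Finset.mem_insert, Finset.mem_singleton] at huD
  rcases huD with h | h | h <;> subst h
  · exact Or.inl hu
  · exact Or.inr (Or.inl hu)
  · exact Or.inr (Or.inr hu)

/-- There is no `P₃`-γ-excellent graph with domination number 3. -/
theorem no_P3_gamma_excellent_with_gamma_three {V : Type*} [Fintype V] (G : SimpleGraph V)
    (hγ : gamma G = 3) : ¬ HGammaExcellent G (SimpleGraph.pathGraph 3) := by
  rintro ⟨h1, h2⟩
  -- V is nonempty, otherwise γ(G) = 0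
  cases isEmpty_or_nonempty V with
  | inl hV =>
    have h0 : gamma G ≤ 0 :=
      Nat.sInf_le ⟨∅, by simp, fun v _ => (hV.false v).elim⟩
    omega
  | inr hV =>
    obtain ⟨x0⟩ := hV
    obtain ⟨S, hxS, ⟨e⟩, D, hD, hSD⟩ := h1 x0
    set a : V := ((e 0 : S) : V) with ha
    set b : V := ((e 1 : S) : V) with hb
    set c : V := ((e 2 : S) : V) with hc
    have hab : G.Adj a b := by
      have := e.map_rel_iff (a := 0) (b := 1)
      rw [SimpleGraph.pathGraph_adj] at this
      have h := this.mpr (by norm_num)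
      simpa [SimpleGraph.comap_adj] using h
    have hbc : G.Adj b c := by
      have := e.map_rel_iff (a := 1) (b := 2)
      rw [SimpleGraph.pathGraph_adj] at this
      have h := this.mpr (by norm_num)
      simpa [SimpleGraph.comap_adj] using h
    have hac : ¬ G.Adj a c := by
      intro h
      have h2' : (SimpleGraph.pathGraph 3).Adj 0 2 :=
        (e.map_rel_iff (a := 0) (b := 2)).mp (by simpa [SimpleGraph.comap_adj] using h)
      rw [SimpleGraph.pathGraph_adj] at h2'
      norm_num at h2'
    have hane : a ≠ c := by
      intro h
      rw [ha, hc] at h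
      have := e.injective (Subtype.ext h)
      norm_num [Fin.ext_iff] at this
    -- u is adjacent to a only (among a,b,c)
    obtain ⟨u, hub, huc, hbu, hcu⟩ := exists_undominated G hγ b c
    have hua : u ≠ a := by rintro rfl; exact hbu hab.symm
    have hau : G.Adj a u := by
      rcases path_dominates G hγ h2 hab hbc hac hane u hua hub huc with h | h | h
      · exact h
      · exact absurd h hbu
      · exact absurd h hcu
    -- v is adjacent to b only (among a,b,c)
    obtain ⟨v, hva, hvc, hav, hcv⟩ := exists_undominated G hγ a c
    have hvb : v ≠ b := by rintro rfl; exact hav hab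
    have hbv : G.Adj b v := by
      rcases path_dominates G hγ h2 hab hbc hac hane v hva hvb hvc with h | h | h
      · exact absurd h hav
      · exact h
      · exact absurd h hcv
    -- the path v - b - c forces u ~ v
    have hvc' : ¬ G.Adj v c := fun h => hcv h.symm
    have huv' : u ≠ v := by rintro rfl; exact hav hau
    have hvu : G.Adj v u := by
      rcases path_dominates G hγ h2 hbv.symm hbc hvc' hvc u huv' hub huc with h | h | h
      · exact h
      · exact absurd h hbu
      · exact absurd h hcu
    -- now a - u - v is an induced P₃ but it does not dominate c
    have hav' : ¬ G.Adj a v := hav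
    rcases path_dominates G hγ h2 hau hvu.symm hav' (Ne.symm hva) c
        hane.symm (Ne.symm huc) (Ne.symm hvc) with h | h | h
    · exact hac h
    · exact hcu h.symm
    · exact hcv h.symm
end

section
/- If G is a graph with β₀(G) = γ(G) = s (independence number equals domination number), then for every k with 1 ≤ k ≤ s, every independent set of size k in G is contained in some minimum dominating set of G, and every vertex belongs to an independent set of size k contained in some minimum dominating set. In particular, G is {K̄₁,…,K̄ₛ}-γ-excellent. -/
/-- The independence number of a finite simple graph. -/
noncomputable def indepNum {V : Type*} [Fintype V] (G : SimpleGraph V) : ℕ :=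
  sSup {k | ∃ I : Finset V, I.card = k ∧ ∀ u ∈ I, ∀ v ∈ I, ¬ G.Adj u v}

lemma gamma_le_card {V : Type*} [Fintype V] (G : SimpleGraph V) (D : Finset V)
    (hD : ∀ v : V, v ∉ D → ∃ u ∈ D, G.Adj u v) : gamma G ≤ D.card :=
  Nat.sInf_le ⟨D, rfl, hD⟩

lemma card_le_indepNum {V : Type*} [Fintype V] (G : SimpleGraph V) (I : Finset V)
    (hI : ∀ u ∈ I, ∀ v ∈ I, ¬ G.Adj u v) : I.card ≤ indepNum G := by
  apply le_csSup
  · exact ⟨Fintype.card V, by rintro k ⟨J, rfl, -⟩; exact J.card_le_univ⟩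
  · exact ⟨I, rfl, hI⟩

lemma exists_gammaSet_superset {V : Type*} [Fintype V] (G : SimpleGraph V) (s : ℕ)
    (hβ : indepNum G = s) (hγ : gamma G = s) (I : Finset V)
    (hI : ∀ u ∈ I, ∀ v ∈ I, ¬ G.Adj u v) :
    ∃ D : Finset V, IsGammaSet G D ∧ I ⊆ D ∧ (∀ u ∈ D, ∀ v ∈ D, ¬ G.Adj u v) := by
  classical
  set S := Finset.univ.powerset.filter
    (fun J => I ⊆ J ∧ ∀ u ∈ J, ∀ v ∈ J, ¬ G.Adj u v) with hSdef
  have hIS : I ∈ S := by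
    simp only [hSdef, Finset.mem_filter, Finset.mem_powerset]
    exact ⟨Finset.subset_univ I, subset_refl I, hI⟩
  obtain ⟨J, hJS, hmax⟩ := S.exists_max_image Finset.card ⟨I, hIS⟩
  simp only [hSdef, Finset.mem_filter, Finset.mem_powerset] at hJS
  obtain ⟨-, hIJ, hJind⟩ := hJS
  have hdom : ∀ v : V, v ∉ J → ∃ u ∈ J, G.Adj u v := by
    intro v hv
    by_contra h
    push_neg at h
    have hmem : insert v J ∈ S := by
      simp only [hSdef, Finset.mem_filter, Finset.mem_powerset]
      refine ⟨Finset.subset_univ _, hIJ.trans (Finset.subset_insert _ _), ?_⟩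
      intro u hu w hw hadj
      rcases Finset.mem_insert.mp hu with h1 | h1 <;>
        rcases Finset.mem_insert.mp hw with h2 | h2
      · subst h1; subst h2; exact G.loopless.irrefl _ hadj
      · exact h w h2 (h1 ▸ hadj).symm
      · exact h u h1 (h2 ▸ hadj)
      · exact hJind u h1 w h2 hadj
    have := hmax _ hmem
    rw [Finset.card_insert_of_notMem hv] at this
    omega
  have h1 : J.card ≤ s := hβ ▸ card_le_indepNum G J hJind
  have h2 : s ≤ J.card := hγ ▸ gamma_le_card G J hdom
  exact ⟨J, ⟨hdom, by omega⟩, hIJ, hJind⟩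

/-- If β₀(G) = γ(G) = s, then for every `1 ≤ k ≤ s` every independent set of size `k`
is contained in some minimum dominating set, and every vertex lies in an independent set
of size `k` contained in some minimum dominating set. -/
theorem indepNum_eq_gamma_Kbar_excellent {V : Type*} [Fintype V] (G : SimpleGraph V) (s : ℕ)
    (hβ : indepNum G = s) (hγ : gamma G = s) :
    ∀ k : ℕ, 1 ≤ k → k ≤ s →
      (∀ I : Finset V, (∀ u ∈ I, ∀ v ∈ I, ¬ G.Adj u v) → I.card = k →
        ∃ D : Finset V, IsGammaSet G D ∧ I ⊆ D) ∧
      (∀ x : V, ∃ I : Finset V, x ∈ I ∧ (∀ u ∈ I, ∀ v ∈ I, ¬ G.Adj u v) ∧ I.card = k ∧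
        ∃ D : Finset V, IsGammaSet G D ∧ I ⊆ D) := by
  classical
  intro k hk1 hks
  constructor
  · intro I hI _
    obtain ⟨D, hD, hID, -⟩ := exists_gammaSet_superset G s hβ hγ I hI
    exact ⟨D, hD, hID⟩
  · intro x
    have hx : ∀ u ∈ ({x} : Finset V), ∀ v ∈ ({x} : Finset V), ¬ G.Adj u v := by
      intro u hu v hv hadj
      simp only [Finset.mem_singleton] at hu hv
      subst hu; subst hv; exact G.loopless.irrefl _ hadj
    obtain ⟨D, hD, hxD, hDind⟩ := exists_gammaSet_superset G s hβ hγ {x} hx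
    have hxmem : x ∈ D := hxD (Finset.mem_singleton_self x)
    have hDcard : D.card = s := hD.2.trans hγ
    have hcard : k - 1 ≤ (D.erase x).card := by
      rw [Finset.card_erase_of_mem hxmem, hDcard]; omega
    obtain ⟨t, hts, htc⟩ := Finset.exists_subset_card_eq hcard
    have hxt : x ∉ t := fun h => Finset.notMem_erase x D (hts h)
    refine ⟨insert x t, Finset.mem_insert_self x t, ?_, ?_, D, hD, ?_⟩
    · have hsub : insert x t ⊆ D := by
        intro u hu
        rcases Finset.mem_insert.mp hu with rfl | hu
        · exact hxmem
        · exact Finset.erase_subset x D (hts hu)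
      intro u hu v hv
      exact hDind u (hsub hu) v (hsub hv)
    · rw [Finset.card_insert_of_notMem hxt, htc]; omega
    · intro u hu
      rcases Finset.mem_insert.mp hu with rfl | hu
      · exact hxmem
      · exact Finset.erase_subset x D (hts hu)
end

section
/- For any two graphs G and H, the domination number of the Cartesian product satisfies γ(G □ H) ≥ min{|V(G)|, |V(H)|}. -/
/-- El-Zahar–Pareek: γ(G □ H) ≥ min{|V(G)|, |V(H)|}. -/
theorem gamma_boxProd_ge_min {V W : Type*} [Fintype V] [Fintype W]
    (G : SimpleGraph V) (H : SimpleGraph W) :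
    min (Fintype.card V) (Fintype.card W) ≤ gamma (G □ H) := by
  classical
  have hne : {k | ∃ D : Finset (V × W), D.card = k ∧
      ∀ v : V × W, v ∉ D → ∃ u ∈ D, (G □ H).Adj u v}.Nonempty :=
    ⟨(Finset.univ : Finset (V × W)).card, Finset.univ, rfl,
      fun v hv => absurd (Finset.mem_univ v) hv⟩
  obtain ⟨D, hcard, hdom⟩ := Nat.sInf_mem hne
  have hγ : gamma (G □ H) = D.card := hcard.symm
  rw [hγ]
  rcases le_or_gt (Fintype.card V) D.card with hV | hV
  · exact (min_le_left _ _).trans hV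
  · have hv0 : ∃ v0 : V, ∀ w, (v0, w) ∉ D := by
      by_contra h
      push_neg at h
      have h1 : (Finset.univ : Finset V).card ≤ (D.image Prod.fst).card := by
        apply Finset.card_le_card
        intro v _
        obtain ⟨w, hw⟩ := h v
        exact Finset.mem_image.2 ⟨(v, w), hw, rfl⟩
      have h2 : (D.image Prod.fst).card ≤ D.card := Finset.card_image_le
      simp only [Finset.card_univ] at h1
      omega
    obtain ⟨v0, hv0⟩ := hv0
    have key : ∀ w : W, ∃ u : V, (u, w) ∈ D := by
      intro w
      obtain ⟨⟨u, w'⟩, hu, hadj⟩ := hdom (v0, w) (hv0 w)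
      rw [SimpleGraph.boxProd_adj] at hadj
      rcases hadj with ⟨_, h2⟩ | ⟨_, h2⟩ <;> simp only [] at h2
      · subst h2; exact ⟨u, hu⟩
      · subst h2; exact absurd hu (hv0 w')
    choose u hu using key
    have hinj : Set.InjOn (fun w => (u w, w)) ↑(Finset.univ : Finset W) :=
      fun a _ b _ h => congrArg Prod.snd h
    have hmaps : ∀ w ∈ (Finset.univ : Finset W), (u w, w) ∈ D := fun w _ => hu w
    have := Finset.card_le_card_of_injOn _ hmaps hinj
    simp only [Finset.card_univ] at this
    exact (min_le_right _ _).trans this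
end

section
/- Let H be a connected noncomplete graph of order n ≥ 3 and let p ≥ n. If every induced subgraph of Kₚ □ H isomorphic to H has as vertex set an H-layer, then γ(Kₚ □ H) = n and Kₚ □ H is H-γ-excellent. -/
/-- The `H`-layer above `x` as a finset. -/
def layerF (W : Type*) [Fintype W] (p : ℕ) (x : Fin p) : Finset (Fin p × W) :=
  Finset.univ.map ⟨fun w => (x, w), fun _ _ hab => congrArg Prod.snd hab⟩

section Aux

variable {W : Type*} [Fintype W] (H : SimpleGraph W) (p : ℕ)

lemma mem_layerF {x : Fin p} {q : Fin p × W} : q ∈ layerF W p x ↔ q.1 = x := by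
  constructor
  · rintro hq
    simp only [layerF, Finset.mem_map, Function.Embedding.coeFn_mk] at hq
    obtain ⟨w, -, rfl⟩ := hq
    rfl
  · intro h
    simp only [layerF, Finset.mem_map, Function.Embedding.coeFn_mk]
    exact ⟨q.2, Finset.mem_univ _, by rw [← h]; rfl⟩

lemma layerF_card (x : Fin p) : (layerF W p x).card = Fintype.card W := by
  rw [layerF, Finset.card_map, Finset.card_univ]

lemma layerF_dominates (x : Fin p) :
    ∀ v : Fin p × W, v ∉ layerF W p x →
      ∃ u ∈ layerF W p x, ((⊤ : SimpleGraph (Fin p)) □ H).Adj u v := by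
  intro v hv
  rw [mem_layerF] at hv
  refine ⟨(x, v.2), (mem_layerF p).2 rfl, ?_⟩
  rw [SimpleGraph.boxProd_adj]
  left
  exact ⟨fun h => hv (h ▸ rfl), rfl⟩

lemma layer_iso (x : Fin p) :
    Nonempty (H ≃g ((⊤ : SimpleGraph (Fin p)) □ H).induce {q : Fin p × W | q.1 = x}) := by
  refine ⟨⟨⟨fun w => ⟨(x, w), rfl⟩, fun q => q.1.2, fun w => rfl, ?_⟩, ?_⟩⟩
  · rintro ⟨⟨a, b⟩, (ha : a = x)⟩
    subst ha
    rfl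
  · intro a b
    simp only [SimpleGraph.comap_adj, Function.Embedding.coe_subtype,
      SimpleGraph.boxProd_adj]
    constructor
    · rintro (⟨h, -⟩ | ⟨h, -⟩)
      · exact absurd h (SimpleGraph.irrefl _)
      · exact h
    · intro h
      exact Or.inr ⟨h, rfl⟩

lemma gamma_lower (n : ℕ) (hn : Fintype.card W = n) (hp : n ≤ p) :
    ∀ k ∈ {k | ∃ D : Finset (Fin p × W), D.card = k ∧
      ∀ v : Fin p × W, v ∉ D → ∃ u ∈ D, ((⊤ : SimpleGraph (Fin p)) □ H).Adj u v}, n ≤ k := by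
  classical
  rintro k ⟨D, rfl, hdom⟩
  by_contra hk
  push_neg at hk
  -- there is an unused column x
  have h1 : (D.image Prod.fst).card < Fintype.card (Fin p) := by
    calc (D.image Prod.fst).card ≤ D.card := Finset.card_image_le
    _ < n := hk
    _ ≤ p := hp
    _ = Fintype.card (Fin p) := (Fintype.card_fin p).symm
  obtain ⟨x, hx⟩ : ∃ x : Fin p, x ∉ D.image Prod.fst := by
    by_contra hall
    push_neg at hall
    have h2 : (Finset.univ : Finset (Fin p)).card ≤ (D.image Prod.fst).card :=
      Finset.card_le_card (fun x _ => hall x)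
    simp only [Finset.card_univ, Fintype.card_fin] at h2
    have h0 : (D.image Prod.fst).card ≤ D.card := Finset.card_image_le
    simp only [Fintype.card_fin] at h1
    omega
  have hx' : ∀ q ∈ D, q.1 ≠ x := by
    intro q hq h
    exact hx (Finset.mem_image.2 ⟨q, hq, h⟩)
  -- second projection of D is all of W
  have hsurj : ∀ w : W, w ∈ D.image Prod.snd := by
    intro w
    have hnd : (x, w) ∉ D := fun h => hx' _ h rfl
    obtain ⟨u, hu, hadj⟩ := hdom (x, w) hnd
    rw [SimpleGraph.boxProd_adj] at hadj
    rcases hadj with ⟨-, h2⟩ | ⟨-, h2⟩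
    · exact Finset.mem_image.2 ⟨u, hu, h2⟩
    · exact absurd h2 (hx' _ hu)
  have : n ≤ D.card := by
    calc n = Fintype.card W := hn.symm
    _ = Finset.univ.card := (Finset.card_univ).symm
    _ ≤ (D.image Prod.snd).card := Finset.card_le_card (fun w _ => hsurj w)
    _ ≤ D.card := Finset.card_image_le
  exact absurd this (not_le.2 hk)

lemma gamma_eq (n : ℕ) (hn : Fintype.card W = n) (h1 : 1 ≤ n) (hp : n ≤ p) :
    gamma ((⊤ : SimpleGraph (Fin p)) □ H) = n := by
  have hpp : 0 < p := lt_of_lt_of_le h1 hp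
  have hmem : n ∈ {k | ∃ D : Finset (Fin p × W), D.card = k ∧
      ∀ v : Fin p × W, v ∉ D → ∃ u ∈ D, ((⊤ : SimpleGraph (Fin p)) □ H).Adj u v} :=
    ⟨layerF W p ⟨0, hpp⟩, by rw [layerF_card, hn], layerF_dominates H p _⟩
  refine le_antisymm (Nat.sInf_le hmem) (le_csInf ⟨n, hmem⟩ (gamma_lower H p n hn hp))

end Aux

/-- If `H` is connected, noncomplete, of order `n ≥ 3`, `p ≥ n`, and every induced copy of `H`
in `Kₚ □ H` has an `H`-layer as vertex set, then `γ(Kₚ □ H) = n` and `Kₚ □ H` is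
`H`-γ-excellent. -/
theorem gamma_boxProd_complete_H_excellent {W : Type*} [Fintype W] (H : SimpleGraph W)
    (n p : ℕ) (hn : Fintype.card W = n) (h3 : 3 ≤ n) (hp : n ≤ p)
    (hconn : H.Connected) (hnc : ∃ u v : W, u ≠ v ∧ ¬ H.Adj u v)
    (hlayer : ∀ S : Set (Fin p × W),
      Nonempty (H ≃g ((⊤ : SimpleGraph (Fin p)) □ H).induce S) →
      ∃ x : Fin p, S = {q : Fin p × W | q.1 = x}) :
    gamma ((⊤ : SimpleGraph (Fin p)) □ H) = n ∧
      HGammaExcellent ((⊤ : SimpleGraph (Fin p)) □ H) H := by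
  have hg := gamma_eq H p n hn (by omega) hp
  have hGset : ∀ x : Fin p, IsGammaSet ((⊤ : SimpleGraph (Fin p)) □ H) (layerF W p x) :=
    fun x => ⟨layerF_dominates H p x, by rw [layerF_card, hn, hg]⟩
  have hcoe : ∀ x : Fin p, {q : Fin p × W | q.1 = x} ⊆ ↑(layerF W p x) := by
    intro x q hq
    exact Finset.mem_coe.2 ((mem_layerF p).2 hq)
  refine ⟨hg, ?_, ?_⟩
  · intro q
    exact ⟨{r : Fin p × W | r.1 = q.1}, rfl, layer_iso H p q.1,
      layerF W p q.1, hGset q.1, hcoe q.1⟩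
  · intro S hS
    obtain ⟨x, rfl⟩ := hlayer S hS
    exact ⟨layerF W p x, hGset x, hcoe x⟩
end

section
/- Let G[Φ] be the generalized lexicographic product of a connected graph G of order n ≥ 2 with graphs F₁,…,Fₙ each of order at least 3. Then for every minimum dominating set D of G[Φ] and every index i, |D ∩ V(Fᵢ)| ≤ 2, and the subgraph of G[Φ] induced by V(G[Φ]) − D is connected. -/
/-- The generalized lexicographic product `G[Φ]` of `G : SimpleGraph (Fin n)` with a family
`F i : SimpleGraph (W i)`: each `F i` is induced, and vertices in distinct fibers `i ≠ j`
are adjacent iff `i` and `j` are adjacent in `G`. -/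
def glex {n : ℕ} {W : Fin n → Type*} (G : SimpleGraph (Fin n))
    (F : ∀ i, SimpleGraph (W i)) : SimpleGraph (Σ i, W i) :=
  SimpleGraph.fromRel (fun x y =>
    if h : x.1 = y.1 then (F x.1).Adj x.2 (cast (congrArg W h.symm) y.2)
    else G.Adj x.1 y.1)

/-- Cross-fiber adjacency in the generalized lexicographic product. -/
lemma glex_adj_cross {n : ℕ} {W : Fin n → Type*} (G : SimpleGraph (Fin n))
    (F : ∀ i, SimpleGraph (W i)) {i j : Fin n} (h : G.Adj i j) (x : W i) (y : W j) :
    (glex G F).Adj ⟨i, x⟩ ⟨j, y⟩ := by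
  refine ⟨?_, Or.inl ?_⟩
  · intro hxy
    exact h.ne (congrArg Sigma.fst hxy)
  · have : (⟨i, x⟩ : Σ i, W i).1 ≠ (⟨j, y⟩ : Σ i, W i).1 := h.ne
    dsimp only
    rw [dif_neg this]
    exact h

/-- Extraction of base adjacency from a cross-fiber edge. -/
lemma glex_adj_base {n : ℕ} {W : Fin n → Type*} (G : SimpleGraph (Fin n))
    (F : ∀ i, SimpleGraph (W i)) {i j : Fin n} {x : W i} {y : W j} (hij : i ≠ j)
    (h : (glex G F).Adj ⟨i, x⟩ ⟨j, y⟩) : G.Adj i j := by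
  rcases h with ⟨-, h | h⟩
  · rwa [dif_neg hij] at h
  · rw [dif_neg (Ne.symm hij)] at h
    exact h.symm

/-- Every vertex of a connected graph on at least two vertices has a neighbor. -/
lemma exists_neighbor {n : ℕ} (G : SimpleGraph (Fin n)) (hn : 2 ≤ n)
    (hconn : G.Connected) (i : Fin n) : ∃ j, G.Adj i j := by
  have hcard : 1 < Fintype.card (Fin n) := by simpa using (show 1 < n by omega)
  obtain ⟨j, hj⟩ := Fintype.exists_ne_of_one_lt_card hcard i
  obtain ⟨w⟩ := hconn.preconnected i j
  cases w with
  | nil => exact absurd rfl (Ne.symm hj)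
  | cons ha _ => exact ⟨_, ha⟩

/-- If `G` is connected of order `n ≥ 2` and every `Fᵢ` has at least 3 vertices, then every
minimum dominating set `D` of `G[Φ]` meets each fiber in at most 2 vertices, and the subgraph
induced by the complement of `D` is connected. -/
theorem glex_gammaSet_fiber_le_two_and_complement_connected
    {n : ℕ} {W : Fin n → Type*} [∀ i, Fintype (W i)] [∀ i, DecidableEq (W i)]
    (G : SimpleGraph (Fin n)) (F : ∀ i, SimpleGraph (W i))
    (hn : 2 ≤ n) (hconn : G.Connected) (hcard : ∀ i, 3 ≤ Fintype.card (W i))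
    (D : Finset (Σ i, W i)) (hD : IsGammaSet (glex G F) D) :
    (∀ i : Fin n, (D.filter (fun x => x.1 = i)).card ≤ 2) ∧
    ((glex G F).induce ((↑D : Set (Σ i, W i))ᶜ)).Connected := by
  classical
  obtain ⟨hdom, hmin⟩ := hD
  -- Part 1: each fiber meets D in at most 2 vertices.
  have part1 : ∀ i : Fin n, (D.filter (fun x => x.1 = i)).card ≤ 2 := by
    intro i
    by_contra hgt
    push_neg at hgt
    have h3 : 3 ≤ (D.filter (fun x => x.1 = i)).card := hgt
    -- pick a neighbor j of i
    obtain ⟨j, hij⟩ := exists_neighbor G hn hconn i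
    -- pick arbitrary vertices in fibers i and j
    have hWi : Nonempty (W i) := Fintype.card_pos_iff.mp (by have := hcard i; omega)
    have hWj : Nonempty (W j) := Fintype.card_pos_iff.mp (by have := hcard j; omega)
    obtain ⟨x0⟩ := hWi
    obtain ⟨u0⟩ := hWj
    set a : Σ i, W i := ⟨i, x0⟩ with ha
    set b : Σ i, W i := ⟨j, u0⟩ with hb
    set D' : Finset (Σ i, W i) := insert a (insert b (D.filter (fun x => x.1 ≠ i))) with hD'
    -- D' is dominating
    have hdom' : ∀ v : Σ i, W i, v ∉ D' → ∃ u ∈ D', (glex G F).Adj u v := by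
      intro v hv
      by_cases hvi : v.1 = i
      · refine ⟨b, by simp [hD'], ?_⟩
        have hGjv : G.Adj j v.1 := by rw [hvi]; exact hij.symm
        exact glex_adj_cross G F hGjv u0 v.2
      · have hvD : v ∉ D := by
          intro hvD
          exact hv (by simp [hD', Finset.mem_filter, hvD, hvi])
        obtain ⟨u, huD, hu⟩ := hdom v hvD
        by_cases hui : u.1 = i
        · have hne : u.1 ≠ v.1 := by rw [hui]; exact fun h => hvi h.symm
          have hGuv : G.Adj u.1 v.1 := glex_adj_base G F hne hu
          have hGiv : G.Adj i v.1 := by rw [← hui]; exact hGuv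
          exact ⟨a, by simp [hD'], glex_adj_cross G F hGiv x0 v.2⟩
        · exact ⟨u, by simp [hD', Finset.mem_filter, huD, hui], hu⟩
    -- card bound
    have hsplit : (D.filter (fun x => x.1 = i)).card + (D.filter (fun x => x.1 ≠ i)).card
        = D.card := by
      simpa using Finset.card_filter_add_card_filter_not
        (s := D) (p := fun x => x.1 = i)
    have hcard' : D'.card ≤ (D.filter (fun x => x.1 ≠ i)).card + 2 := by
      calc D'.card ≤ (insert b (D.filter (fun x => x.1 ≠ i))).card + 1 :=
            Finset.card_insert_le _ _
        _ ≤ (D.filter (fun x => x.1 ≠ i)).card + 1 + 1 := by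
            have := Finset.card_insert_le b (D.filter (fun x => x.1 ≠ i))
            omega
        _ = (D.filter (fun x => x.1 ≠ i)).card + 2 := by omega
    have hlt : D'.card < D.card := by omega
    have hgle : gamma (glex G F) ≤ D'.card := Nat.sInf_le ⟨D', rfl, hdom'⟩
    omega
  refine ⟨part1, ?_⟩
  -- each fiber has a vertex outside D
  have hcomp : ∀ i : Fin n, ∃ w : W i, (⟨i, w⟩ : Σ i, W i) ∉ D := by
    intro i
    by_contra hall
    push_neg at hall
    have hsub : (Finset.univ.image (fun w : W i => (⟨i, w⟩ : Σ i, W i)))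
        ⊆ D.filter (fun x => x.1 = i) := by
      intro x hx
      simp only [Finset.mem_image] at hx
      obtain ⟨w, -, rfl⟩ := hx
      simp [Finset.mem_filter, hall w]
    have hinj : (Finset.univ.image (fun w : W i => (⟨i, w⟩ : Σ i, W i))).card
        = Fintype.card (W i) := by
      rw [Finset.card_image_of_injective _ sigma_mk_injective]
      simp
    have := Finset.card_le_card hsub
    have := part1 i
    have := hcard i
    omega
  set S : Set (Σ i, W i) := (↑D : Set (Σ i, W i))ᶜ with hS
  set H := (glex G F).induce S with hH
  have hmemS : ∀ {v : Σ i, W i}, v ∉ D → v ∈ S := fun hv => by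
    simp [hS, hv]
  -- adjacency in the induced graph
  have hadjH : ∀ {x y : Σ i, W i} (hx : x ∈ S) (hy : y ∈ S),
      (glex G F).Adj x y → H.Adj ⟨x, hx⟩ ⟨y, hy⟩ := by
    intro x y hx hy h
    exact h
  -- same-fiber reachability and walk induction
  have same : ∀ (i : Fin n) (x y : W i) (hx : (⟨i, x⟩ : Σ i, W i) ∈ S)
      (hy : (⟨i, y⟩ : Σ i, W i) ∈ S), H.Reachable ⟨⟨i, x⟩, hx⟩ ⟨⟨i, y⟩, hy⟩ := by
    intro i x y hx hy
    by_cases hxy : x = y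
    · subst hxy
      exact SimpleGraph.Reachable.refl _
    · obtain ⟨k, hik⟩ := exists_neighbor G hn hconn i
      obtain ⟨z, hz⟩ := hcomp k
      have hzS : (⟨k, z⟩ : Σ i, W i) ∈ S := hmemS hz
      exact (SimpleGraph.Adj.reachable
          (hadjH hx hzS (glex_adj_cross G F hik x z))).trans
        (SimpleGraph.Adj.reachable
          (hadjH hzS hy (glex_adj_cross G F hik.symm z y)))
  have main : ∀ {i j : Fin n} (w : G.Walk i j) (x : W i) (y : W j)
      (hx : (⟨i, x⟩ : Σ i, W i) ∈ S) (hy : (⟨j, y⟩ : Σ i, W i) ∈ S),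
      H.Reachable ⟨⟨i, x⟩, hx⟩ ⟨⟨j, y⟩, hy⟩ := by
    intro i j w
    induction w with
    | nil => intro x y hx hy; exact same _ x y hx hy
    | @cons i k j ha p ih =>
      intro x y hx hy
      obtain ⟨z, hz⟩ := hcomp k
      have hzS : (⟨k, z⟩ : Σ i, W i) ∈ S := hmemS hz
      exact (SimpleGraph.Adj.reachable
        (hadjH hx hzS (glex_adj_cross G F ha x z))).trans (ih z y hzS hy)
  rw [SimpleGraph.connected_iff]
  constructor
  · intro u v
    obtain ⟨⟨i, x⟩, hu⟩ := u
    obtain ⟨⟨j, y⟩, hv⟩ := v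
    obtain ⟨w⟩ := hconn.preconnected i j
    exact main w x y hu hv
  · 
    obtain ⟨z, hz⟩ := hcomp ⟨0, by omega⟩
    exact ⟨⟨⟨_, z⟩, hmemS hz⟩⟩
end

section
/- Let G[Φ] be the generalized lexicographic product of a connected graph G of order n ≥ 2 with complete graphs F₁,…,Fₙ, each of order at least 2. Then γ(G[Φ]) = γ(G). Moreover: (i) every minimum dominating set of G[Φ] is contained in some G-layer U and is a minimum dominating set of the subgraph induced by U; (ii) every minimum dominating set of a subgraph induced by a G-layer is a minimum dominating set of G[Φ]. -/
/-- `D` is a minimum dominating set of the subgraph of `glex G F` induced by the `G`-layer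
determined by the choice function `u`. -/
def IsGammaSetOfLayer {n : ℕ} {W : Fin n → Type*} [∀ i, Fintype (W i)]
    (G : SimpleGraph (Fin n)) (F : ∀ i, SimpleGraph (W i)) (u : ∀ i, W i)
    (D : Finset (Σ i, W i)) : Prop :=
  (↑D : Set (Σ i, W i)) ⊆ Set.range (fun i => (⟨i, u i⟩ : Σ i, W i)) ∧
  (∀ i : Fin n, (⟨i, u i⟩ : Σ i, W i) ∉ D →
    ∃ d ∈ D, (glex G F).Adj d ⟨i, u i⟩) ∧
  ∀ D' : Finset (Σ i, W i),
    (↑D' : Set (Σ i, W i)) ⊆ Set.range (fun i => (⟨i, u i⟩ : Σ i, W i)) →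
    (∀ i : Fin n, (⟨i, u i⟩ : Σ i, W i) ∉ D' → ∃ d ∈ D', (glex G F).Adj d ⟨i, u i⟩) →
    D.card ≤ D'.card

lemma gamma_le {V : Type*} [Fintype V] (G : SimpleGraph V) (D : Finset V)
    (h : ∀ v : V, v ∉ D → ∃ u ∈ D, G.Adj u v) : gamma G ≤ D.card :=
  Nat.sInf_le ⟨D, rfl, h⟩

lemma exists_gammaSet {V : Type*} [Fintype V] (G : SimpleGraph V) :
    ∃ D : Finset V, D.card = gamma G ∧ ∀ v : V, v ∉ D → ∃ u ∈ D, G.Adj u v := by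
  have hne : {k | ∃ D : Finset V, D.card = k ∧ ∀ v : V, v ∉ D → ∃ u ∈ D, G.Adj u v}.Nonempty :=
    ⟨(Finset.univ : Finset V).card, Finset.univ, rfl, fun v hv => absurd (Finset.mem_univ v) hv⟩
  obtain ⟨D, hcard, hdom⟩ := Nat.sInf_mem hne
  exact ⟨D, hcard, hdom⟩

lemma glex_adj {n : ℕ} {W : Fin n → Type*} (G : SimpleGraph (Fin n))
    (F : ∀ i, SimpleGraph (W i))
    (hcomplete : ∀ i, ∀ a b : W i, a ≠ b → (F i).Adj a b)
    (x y : Σ i, W i) :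
    (glex G F).Adj x y ↔ x ≠ y ∧ (x.1 = y.1 ∨ G.Adj x.1 y.1) := by
  obtain ⟨i, a⟩ := x; obtain ⟨j, b⟩ := y
  simp only [glex, SimpleGraph.fromRel_adj]
  constructor
  · rintro ⟨hne, h | h⟩
    · refine ⟨hne, ?_⟩
      by_cases hij : (i : Fin n) = j
      · exact Or.inl hij
      · rw [dif_neg hij] at h; exact Or.inr h
    · refine ⟨hne, ?_⟩
      by_cases hij : (j : Fin n) = i
      · exact Or.inl hij.symm
      · rw [dif_neg hij] at h; exact Or.inr (G.adj_symm h)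
  · rintro ⟨hne, h | h⟩
    · subst h
      refine ⟨hne, Or.inl ?_⟩
      rw [dif_pos rfl]
      have hab : a ≠ b := by
        intro hab; exact hne (by rw [hab])
      exact hcomplete i a b hab
    · have hij : (i : Fin n) ≠ j := G.ne_of_adj h
      exact ⟨hne, Or.inl (by rw [dif_neg hij]; exact h)⟩

lemma layer_dominates {n : ℕ} {W : Fin n → Type*} [∀ i, Fintype (W i)]
    (G : SimpleGraph (Fin n)) (F : ∀ i, SimpleGraph (W i))
    (hcomplete : ∀ i, ∀ a b : W i, a ≠ b → (F i).Adj a b)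
    (u : ∀ i, W i) (D : Finset (Σ i, W i))
    (hsub : (↑D : Set (Σ i, W i)) ⊆ Set.range (fun i => (⟨i, u i⟩ : Σ i, W i)))
    (hdom : ∀ i : Fin n, (⟨i, u i⟩ : Σ i, W i) ∉ D → ∃ d ∈ D, (glex G F).Adj d ⟨i, u i⟩) :
    ∀ v : Σ i, W i, v ∉ D → ∃ d ∈ D, (glex G F).Adj d v := by
  rintro ⟨j, w⟩ hv
  by_cases h : (⟨j, u j⟩ : Σ i, W i) ∈ D
  · refine ⟨⟨j, u j⟩, h, ?_⟩
    rw [glex_adj G F hcomplete]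
    exact ⟨fun he => hv (he ▸ h), Or.inl rfl⟩
  · obtain ⟨d, hd, hadj⟩ := hdom j h
    rw [glex_adj G F hcomplete] at hadj
    obtain ⟨hne, hor⟩ := hadj
    refine ⟨d, hd, ?_⟩
    rw [glex_adj G F hcomplete]
    refine ⟨fun he => hv (he ▸ hd), ?_⟩
    rcases hor with heq | hGadj
    · exfalso
      obtain ⟨i, hi⟩ := hsub hd
      apply h
      have : (i : Fin n) = j := by rw [← hi] at heq; exact heq
      subst this
      rw [← hi] at hd
      exact hd
    · exact Or.inr hGadj

open Classical in
lemma image_layer {n : ℕ} {W : Fin n → Type*} [∀ i, Fintype (W i)]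
    (G : SimpleGraph (Fin n)) (F : ∀ i, SimpleGraph (W i))
    (hcomplete : ∀ i, ∀ a b : W i, a ≠ b → (F i).Adj a b)
    (u : ∀ i, W i) (S : Finset (Fin n))
    (hS : ∀ v : Fin n, v ∉ S → ∃ s ∈ S, G.Adj s v) :
    ((↑(S.image (fun i => (⟨i, u i⟩ : Σ i, W i))) : Set (Σ i, W i)) ⊆
        Set.range (fun i => (⟨i, u i⟩ : Σ i, W i))) ∧
    (∀ i : Fin n, (⟨i, u i⟩ : Σ i, W i) ∉ S.image (fun i => (⟨i, u i⟩ : Σ i, W i)) →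
      ∃ d ∈ S.image (fun i => (⟨i, u i⟩ : Σ i, W i)), (glex G F).Adj d ⟨i, u i⟩) ∧
    (S.image (fun i => (⟨i, u i⟩ : Σ i, W i))).card = S.card := by
  have hinj : Function.Injective (fun i => (⟨i, u i⟩ : Σ i, W i)) := by
    intro a b hab
    exact congrArg Sigma.fst hab
  refine ⟨?_, ?_, Finset.card_image_of_injective _ hinj⟩
  · intro x hx
    simp only [Finset.coe_image, Set.mem_image] at hx
    obtain ⟨i, _, hi⟩ := hx
    exact ⟨i, hi⟩
  · intro i hi
    have hiS : i ∉ S := fun hiS => hi (Finset.mem_image_of_mem _ hiS)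
    obtain ⟨s, hsS, hadj⟩ := hS i hiS
    refine ⟨⟨s, u s⟩, Finset.mem_image_of_mem _ hsS, ?_⟩
    rw [glex_adj G F hcomplete]
    refine ⟨fun he => G.ne_of_adj hadj (congrArg Sigma.fst he), Or.inr hadj⟩

open Classical in
lemma proj_dominates {n : ℕ} {W : Fin n → Type*} [∀ i, Fintype (W i)]
    [hne : ∀ i, Nonempty (W i)]
    (G : SimpleGraph (Fin n)) (F : ∀ i, SimpleGraph (W i))
    (hcomplete : ∀ i, ∀ a b : W i, a ≠ b → (F i).Adj a b)
    (D : Finset (Σ i, W i))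
    (hD : ∀ v : Σ i, W i, v ∉ D → ∃ d ∈ D, (glex G F).Adj d v) :
    ∀ v : Fin n, v ∉ D.image Sigma.fst → ∃ j ∈ D.image Sigma.fst, G.Adj j v := by
  intro v hv
  have hvD : (⟨v, Classical.arbitrary (W v)⟩ : Σ i, W i) ∉ D := by
    intro hmem
    exact hv (Finset.mem_image_of_mem Sigma.fst hmem)
  obtain ⟨d, hd, hadj⟩ := hD _ hvD
  rw [glex_adj G F hcomplete] at hadj
  obtain ⟨hne', hor⟩ := hadj
  rcases hor with heq | hGadj
  · have heq' : d.1 = v := heq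
    exact absurd (heq' ▸ Finset.mem_image_of_mem Sigma.fst hd) hv
  · exact ⟨d.1, Finset.mem_image_of_mem Sigma.fst hd, hGadj⟩

/-- For `G` connected of order `n ≥ 2` and all `Fᵢ` complete of order at least 2:
`γ(G[Φ]) = γ(G)`; every minimum dominating set of `G[Φ]` is contained in a `G`-layer and is a
minimum dominating set of the subgraph induced by that layer; and every minimum dominating set
of a subgraph induced by a `G`-layer is a minimum dominating set of `G[Φ]`. -/
theorem glex_complete_fibers_gamma {n : ℕ} {W : Fin n → Type*} [∀ i, Fintype (W i)]
    (G : SimpleGraph (Fin n)) (F : ∀ i, SimpleGraph (W i))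
    (hn : 2 ≤ n) (hconn : G.Connected)
    (hcard : ∀ i, 2 ≤ Fintype.card (W i))
    (hcomplete : ∀ i, ∀ a b : W i, a ≠ b → (F i).Adj a b) :
    gamma (glex G F) = gamma G ∧
    (∀ D : Finset (Σ i, W i), IsGammaSet (glex G F) D →
      ∃ u : ∀ i, W i, IsGammaSetOfLayer G F u D) ∧
    (∀ (u : ∀ i, W i) (D : Finset (Σ i, W i)),
      IsGammaSetOfLayer G F u D → IsGammaSet (glex G F) D) := by
  classical
  haveI hneW : ∀ i, Nonempty (W i) := fun i =>
    Fintype.card_pos_iff.mp (lt_of_lt_of_le two_pos (hcard i))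
  obtain ⟨S, hScard, hSdom⟩ := exists_gammaSet G
  have hle1 : gamma (glex G F) ≤ gamma G := by
    set u0 : ∀ i, W i := fun i => Classical.arbitrary (W i) with hu0
    obtain ⟨hsub, hdomL, hcardS⟩ := image_layer G F hcomplete u0 S hSdom
    have hdomAll := layer_dominates G F hcomplete u0 _ hsub hdomL
    calc gamma (glex G F) ≤ _ := gamma_le _ _ hdomAll
      _ = S.card := hcardS
      _ = gamma G := hScard
  have hle2 : gamma G ≤ gamma (glex G F) := by
    obtain ⟨D, hDcard, hDdom⟩ := exists_gammaSet (glex G F)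
    have hproj := proj_dominates G F hcomplete D hDdom
    calc gamma G ≤ (D.image Sigma.fst).card := gamma_le G _ hproj
      _ ≤ D.card := Finset.card_image_le
      _ = gamma (glex G F) := hDcard
  have heq : gamma (glex G F) = gamma G := le_antisymm hle1 hle2
  refine ⟨heq, ?_, ?_⟩
  · rintro D ⟨hDdom, hDcard⟩
    have hproj := proj_dominates G F hcomplete D hDdom
    have h1 : gamma G ≤ (D.image Sigma.fst).card := gamma_le G _ hproj
    have h2 : (D.image Sigma.fst).card ≤ D.card := Finset.card_image_le
    have h3 : (D.image Sigma.fst).card = D.card := by omega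
    have hinjOn : Set.InjOn (Sigma.fst : (Σ i, W i) → Fin n) (↑D : Set (Σ i, W i)) := Finset.card_image_iff.mp h3
    refine ⟨fun i =>
      if h : ∃ w : W i, (⟨i, w⟩ : Σ i, W i) ∈ D then Classical.choose h
      else Classical.arbitrary (W i), ?_, ?_, ?_⟩
    · rintro ⟨i, w⟩ hd
      have hex : ∃ w' : W i, (⟨i, w'⟩ : Σ i, W i) ∈ D := ⟨w, hd⟩
      have hmem := Classical.choose_spec hex
      have hsig : (⟨i, Classical.choose hex⟩ : Σ i, W i) = ⟨i, w⟩ :=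
        hinjOn (Finset.mem_coe.mpr hmem) (Finset.mem_coe.mpr hd) rfl
      refine ⟨i, ?_⟩
      simp only [dif_pos hex]
      exact hsig
    · intro i hi
      exact hDdom _ hi
    · intro D' hsub' hdom'
      have hdomAll := layer_dominates G F hcomplete _ D' hsub' hdom'
      calc D.card = gamma (glex G F) := hDcard
        _ ≤ D'.card := gamma_le _ _ hdomAll
  · rintro u D ⟨hsub, hdomL, hmin⟩
    have hdomAll := layer_dominates G F hcomplete u D hsub hdomL
    refine ⟨hdomAll, ?_⟩
    obtain ⟨hsub0, hdom0, hcard0⟩ := image_layer G F hcomplete u S hSdom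
    have hDle : D.card ≤ gamma G := by
      calc D.card ≤ _ := hmin _ hsub0 hdom0
        _ = gamma G := by rw [hcard0, hScard]
    have hge : gamma (glex G F) ≤ D.card := gamma_le _ _ hdomAll
    omega
end

section
/- Let G be an s-regular connected graph of order n that is K_r-γ-excellent with γ(G) = r, where n > s ≥ r ≥ 3. Then n ≤ r(s − r + 2). -/
/-- If `G` is an `s`-regular connected `Kᵣ`-γ-excellent graph of order `n` with `γ(G) = r` and
`n > s ≥ r ≥ 3`, then `n ≤ r(s - r + 2)`. -/
theorem regular_Kr_excellent_order_bound {V : Type*} [Fintype V]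
    (G : SimpleGraph V) [DecidableRel G.Adj] (r s : ℕ)
    (hconn : G.Connected) (hreg : ∀ v : V, G.degree v = s)
    (hr : 3 ≤ r) (hrs : r ≤ s) (hsn : s < Fintype.card V)
    (hγ : gamma G = r)
    (hexc : HGammaExcellent G (⊤ : SimpleGraph (Fin r))) :
    Fintype.card V ≤ r * (s - r + 2) := by
  classical
  have hV : Nonempty V := Fintype.card_pos_iff.mp (lt_of_le_of_lt (Nat.zero_le s) hsn)
  obtain ⟨x⟩ := hV
  obtain ⟨S, hxS, ⟨e⟩, D, ⟨hDdom, hDcard⟩, hSD⟩ := hexc.1 x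
  rw [hγ] at hDcard
  have hScard : S.toFinset.card = r := by
    rw [Set.toFinset_card, ← Fintype.card_fin r]
    exact (Fintype.card_congr e.toEquiv).symm
  have hSsub : S.toFinset ⊆ D := fun v hv => hSD (Set.mem_toFinset.mp hv)
  have hSeq : S.toFinset = D :=
    Finset.eq_of_subset_of_card_le hSsub (by rw [hScard, hDcard])
  have hclique : ∀ u ∈ D, ∀ w ∈ D, u ≠ w → G.Adj u w := by
    intro u hu w hw huw
    have huS : u ∈ S := Set.mem_toFinset.mp (hSeq ▸ hu)
    have hwS : w ∈ S := Set.mem_toFinset.mp (hSeq ▸ hw)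
    have hne : e.symm ⟨u, huS⟩ ≠ e.symm ⟨w, hwS⟩ := by
      intro h
      exact huw (Subtype.ext_iff.mp (e.symm.injective h))
    have hadj : (G.induce S).Adj ⟨u, huS⟩ ⟨w, hwS⟩ := by
      have := e.symm.map_adj_iff (v := ⟨u, huS⟩) (w := ⟨w, hwS⟩)
      rw [SimpleGraph.top_adj] at this
      exact this.mp hne
    exact hadj
  have hcover : (Finset.univ : Finset V) ⊆
      D.biUnion (fun u => insert u (G.neighborFinset u \ D)) := by
    intro v _
    by_cases hv : v ∈ D
    · exact Finset.mem_biUnion.mpr ⟨v, hv, Finset.mem_insert_self _ _⟩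
    · obtain ⟨u, hu, hadj⟩ := hDdom v hv
      exact Finset.mem_biUnion.mpr ⟨u, hu, Finset.mem_insert.mpr (Or.inr
        (Finset.mem_sdiff.mpr ⟨(G.mem_neighborFinset u v).mpr hadj, hv⟩))⟩
  have hbound : ∀ u ∈ D, (insert u (G.neighborFinset u \ D)).card ≤ s - r + 2 := by
    intro u hu
    have hsub : D.erase u ⊆ G.neighborFinset u ∩ D := by
      intro w hw
      have hwD := Finset.mem_of_mem_erase hw
      have hne : u ≠ w := fun h => (Finset.ne_of_mem_erase hw) h.symm
      exact Finset.mem_inter.mpr ⟨(G.mem_neighborFinset u w).mpr (hclique u hu w hwD hne), hwD⟩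
    have hinter : r - 1 ≤ (G.neighborFinset u ∩ D).card := by
      have := Finset.card_le_card hsub
      rwa [Finset.card_erase_of_mem hu, hDcard] at this
    have hkey : (G.neighborFinset u \ D).card + (G.neighborFinset u ∩ D).card = s := by
      rw [Finset.card_sdiff_add_card_inter, ← hreg u, SimpleGraph.card_neighborFinset_eq_degree]
    have h1 : (G.neighborFinset u \ D).card ≤ s - (r - 1) := by omega
    calc (insert u (G.neighborFinset u \ D)).card
        ≤ (G.neighborFinset u \ D).card + 1 := Finset.card_insert_le _ _
      _ ≤ s - (r - 1) + 1 := by omega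
      _ = s - r + 2 := by omega
  calc Fintype.card V = (Finset.univ : Finset V).card := (Finset.card_univ).symm
    _ ≤ (D.biUnion (fun u => insert u (G.neighborFinset u \ D))).card :=
        Finset.card_le_card hcover
    _ ≤ ∑ u ∈ D, (insert u (G.neighborFinset u \ D)).card := Finset.card_biUnion_le
    _ ≤ ∑ _u ∈ D, (s - r + 2) := Finset.sum_le_sum hbound
    _ = r * (s - r + 2) := by rw [Finset.sum_const, hDcard, smul_eq_mul]
end
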